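/- Let B and C be bounded linear operators on H that are A-selfadjoint. Then (1/2)·‖B² + C²‖_A + (1/2)·max{‖B‖_A, ‖C‖_A}·| ‖B+C‖_A − ‖B−C‖_A | ≤ (w_{A,e}(B,C))². -/

import Mathlib

noncomputable section

open scoped ComplexInnerProductSpace

variable {H : Type*} [NormedAddCommGroup H] [InnerProductSpace ℂ H] [CompleteSpace H]

/-- The semi-inner product induced by a positive operator `A`:
`⟨x,y⟩_A = ⟨Ax,y⟩` (linear in the first argument, following the paper's convention). -/
def innerA (A : H →L[ℂ] H) (x y : H) : ℂ := ⟪y, A x⟫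

/-- The seminorm induced by `A`: `‖x‖_A = ⟨Ax,x⟩^{1/2}`. -/
def normA (A : H →L[ℂ] H) (x : H) : ℝ := Real.sqrt (innerA A x x).re

/-- The `A`-numerical radius `w_A(T) = sup { |⟨Tx,x⟩_A| : ‖x‖_A = 1 }`. -/
def wA (A T : H →L[ℂ] H) : ℝ :=
  sSup {r : ℝ | ∃ x : H, normA A x = 1 ∧ r = ‖innerA A (T x) x‖}

/-- The `A`-Crawford number `c_A(T) = inf { |⟨Tx,x⟩_A| : ‖x‖_A = 1 }`. -/
def cA (A T : H →L[ℂ] H) : ℝ :=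
  sInf {r : ℝ | ∃ x : H, normA A x = 1 ∧ r = ‖innerA A (T x) x‖}

/-- The `A`-operator seminorm `‖T‖_A = sup { ‖Tx‖_A : ‖x‖_A = 1 }`. -/
def opNormA (A T : H →L[ℂ] H) : ℝ :=
  sSup {r : ℝ | ∃ x : H, normA A x = 1 ∧ r = normA A (T x)}

/-- The `A`-Euclidean operator radius of the pair `(B, C)`. -/
def wAe (A B C : H →L[ℂ] H) : ℝ :=
  sSup {r : ℝ | ∃ x : H, normA A x = 1 ∧
    r = Real.sqrt ((‖innerA A (B x) x‖)^2 + (‖innerA A (C x) x‖)^2)}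

/-- The `A`-Euclidean operator seminorm of the pair `(B, C)`. -/
def normAe (A B C : H →L[ℂ] H) : ℝ :=
  sSup {r : ℝ | ∃ x : H, normA A x = 1 ∧
    r = Real.sqrt ((normA A (B x))^2 + (normA A (C x))^2)}

/-- `Re_A(T) = (T + T♯)/2`, where `Ts` is an `A`-adjoint of `T`. -/
def ReA (T Ts : H →L[ℂ] H) : H →L[ℂ] H := (2 : ℂ)⁻¹ • (T + Ts)

/-- `Im_A(T) = (T - T♯)/(2i)`, where `Ts` is an `A`-adjoint of `T`. -/
def ImA (T Ts : H →L[ℂ] H) : H →L[ℂ] H := (2 * Complex.I)⁻¹ • (T - Ts)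


/-!
Write `s = ‖B + C‖_A` and `t = ‖B - C‖_A`. The identities `2(B² + C²) = (B + C)² + (B - C)²`,
`2B = (B + C) + (B - C)` and `2C = (B + C) - (B - C)` give `‖B² + C²‖_A ≤ (s² + t²)/2` and
`max (‖B‖_A, ‖C‖_A) ≤ (s + t)/2`, so the left-hand side is at most `max (s, t)²/2`.
Since `B ± C` is `A`-selfadjoint, polarization gives `‖B ± C‖_A ≤ w_A(B ± C)`, and
`|⟨(B ± C)x, x⟩_A| ≤ |⟨Bx, x⟩_A| + |⟨Cx, x⟩_A| ≤ √2 (|⟨Bx, x⟩_A|² + |⟨Cx, x⟩_A|²)^{1/2}`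
gives `w_A(B ± C) ≤ √2 w_{A,e}(B, C)`.
All suprema involved are finite because an `A`-selfadjoint operator is bounded for `‖·‖_A`
(Reid's inequality); throughout, `‖x‖_A = ‖A^{1/2} x‖`.
-/

open ContinuousLinearMap

lemma le_of_forall_pow_two_pow_le_mul {r c K : ℝ} (hc : 0 ≤ c)
    (h : ∀ n : ℕ, r ^ 2 ^ n ≤ K * c ^ 2 ^ n) : r ≤ c := by
  by_contra! hcr
  rcases hc.eq_or_lt with rfl | hc
  · have := h 0
    simp only [pow_zero, pow_one, zero_pow one_ne_zero, mul_zero] at this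
    linarith
  · have hrc : 1 < r / c := (one_lt_div hc).mpr hcr
    obtain ⟨n, hn⟩ := pow_unbounded_of_one_lt K hrc
    have : (r / c) ^ 2 ^ n ≤ K := by
      rw [div_pow, div_le_iff₀ (by positivity)]
      exact h n
    linarith [pow_le_pow_right₀ hrc.le (Nat.lt_two_pow_self (n := n)).le]

def IsSelfAdjointA (A T : H →L[ℂ] H) : Prop :=
  A.comp T = (adjoint T).comp A

def IsBoundedA (A T : H →L[ℂ] H) : Prop :=
  ∃ K : ℝ, ∀ x, normA A (T x) ≤ K * normA A x

section Elementary

variable {E : Type*} [NormedAddCommGroup E] [InnerProductSpace ℂ E] {A T : E →L[ℂ] E}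

lemma normA_nonneg (A : E →L[ℂ] E) (x : E) : 0 ≤ normA A x :=
  Real.sqrt_nonneg _

lemma normA_neg (A : E →L[ℂ] E) (x : E) : normA A (-x) = normA A x := by
  simp [normA, innerA]

lemma opNormA_nonneg (A T : E →L[ℂ] E) : 0 ≤ opNormA A T :=
  Real.sSup_nonneg (by rintro _ ⟨x, -, rfl⟩; exact normA_nonneg A _)

lemma opNormA_neg (A T : E →L[ℂ] E) : opNormA A (-T) = opNormA A T := by
  simp only [opNormA, neg_apply, normA_neg]

lemma wA_nonneg (A T : E →L[ℂ] E) : 0 ≤ wA A T :=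
  Real.sSup_nonneg (by rintro _ ⟨x, -, rfl⟩; exact norm_nonneg _)

lemma wAe_nonneg (A B C : E →L[ℂ] E) : 0 ≤ wAe A B C :=
  Real.sSup_nonneg (by rintro _ ⟨x, -, rfl⟩; exact Real.sqrt_nonneg _)

lemma opNormA_le {K : ℝ} (hK : 0 ≤ K) (h : ∀ x, normA A x = 1 → normA A (T x) ≤ K) :
    opNormA A T ≤ K :=
  Real.sSup_le (by rintro _ ⟨x, hx, rfl⟩; exact h x hx) hK

lemma wA_le {K : ℝ} (hK : 0 ≤ K) (h : ∀ x, normA A x = 1 → ‖innerA A (T x) x‖ ≤ K) :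
    wA A T ≤ K :=
  Real.sSup_le (by rintro _ ⟨x, hx, rfl⟩; exact h x hx) hK

lemma IsBoundedA.le_opNormA (hT : IsBoundedA A T) {x : E} (hx : normA A x = 1) :
    normA A (T x) ≤ opNormA A T := by
  obtain ⟨K, hK⟩ := hT
  exact le_csSup ⟨K, by rintro _ ⟨y, hy, rfl⟩; simpa [hy] using hK y⟩ ⟨x, hx, rfl⟩

lemma IsBoundedA.neg (hT : IsBoundedA A T) : IsBoundedA A (-T) := by
  obtain ⟨K, hK⟩ := hT
  exact ⟨K, by simpa only [neg_apply, normA_neg] using hK⟩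

end Elementary

section Seminorm

variable {A : H →L[ℂ] H}

lemma innerA_eq_inner_sqrt (hA : A.IsPositive) (x y : H) :
    innerA A x y = ⟪CFC.sqrt A y, CFC.sqrt A x⟫ := by
  have hA' : 0 ≤ A := (nonneg_iff_isPositive A).mpr hA
  have hS := (CFC.sqrt_nonneg A).isSelfAdjoint
  rw [innerA]
  conv_lhs => rw [← CFC.sqrt_mul_sqrt_self A hA', mul_apply_eq_comp, ← hS.adjoint_eq]
  rw [adjoint_inner_right, hS.adjoint_eq]

lemma re_innerA_self (hA : A.IsPositive) (x : H) :
    (innerA A x x).re = ‖CFC.sqrt A x‖ ^ 2 := by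
  rw [innerA_eq_inner_sqrt hA]
  exact inner_self_eq_norm_sq (𝕜 := ℂ) _

lemma normA_eq_norm_sqrt (hA : A.IsPositive) (x : H) : normA A x = ‖CFC.sqrt A x‖ := by
  rw [normA, re_innerA_self hA, Real.sqrt_sq (norm_nonneg _)]

lemma normA_sq (hA : A.IsPositive) (x : H) : normA A x ^ 2 = (innerA A x x).re := by
  rw [normA_eq_norm_sqrt hA, re_innerA_self hA]

lemma normA_smul (hA : A.IsPositive) (c : ℂ) (x : H) : normA A (c • x) = ‖c‖ * normA A x := by
  rw [normA_eq_norm_sqrt hA, normA_eq_norm_sqrt hA, map_smul, norm_smul]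

lemma normA_smul_ofReal (hA : A.IsPositive) {r : ℝ} (hr : 0 ≤ r) (x : H) :
    normA A ((r : ℂ) • x) = r * normA A x := by
  rw [normA_smul hA, Complex.norm_real, Real.norm_of_nonneg hr]

lemma normA_add_le (hA : A.IsPositive) (x y : H) : normA A (x + y) ≤ normA A x + normA A y := by
  simpa only [normA_eq_norm_sqrt hA, map_add] using norm_add_le _ _

lemma normA_add_sq_add_normA_sub_sq (hA : A.IsPositive) (x y : H) :
    normA A (x + y) ^ 2 + normA A (x - y) ^ 2 = 2 * (normA A x ^ 2 + normA A y ^ 2) := by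
  simpa only [normA_eq_norm_sqrt hA, map_add, map_sub] using parallelogram_law_with_norm ℂ _ _

lemma normA_le (hA : A.IsPositive) (x : H) : normA A x ≤ ‖CFC.sqrt A‖ * ‖x‖ := by
  rw [normA_eq_norm_sqrt hA]
  exact le_opNorm _ _

lemma norm_innerA_le (hA : A.IsPositive) (x y : H) :
    ‖innerA A x y‖ ≤ normA A x * normA A y := by
  rw [innerA_eq_inner_sqrt hA, normA_eq_norm_sqrt hA, normA_eq_norm_sqrt hA, mul_comm]
  exact norm_inner_le_norm _ _

lemma innerA_conj_symm (hA : A.IsPositive) (x y : H) :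
    starRingEnd ℂ (innerA A x y) = innerA A y x := by
  rw [innerA_eq_inner_sqrt hA, innerA_eq_inner_sqrt hA, inner_conj_symm]

lemma exists_normA_eq_one_smul (hA : A.IsPositive) {x : H} (hx : normA A x ≠ 0) :
    ∃ u, normA A u = 1 ∧ x = (normA A x : ℂ) • u := by
  refine ⟨((normA A x)⁻¹ : ℂ) • x, ?_, ?_⟩
  · rw [normA_smul hA, norm_inv, Complex.norm_real, Real.norm_of_nonneg (normA_nonneg A x),
      inv_mul_cancel₀ hx]
  · rw [smul_smul, mul_inv_cancel₀ (by exact_mod_cast hx), one_smul]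

end Seminorm

namespace IsBoundedA

variable {A S T : H →L[ℂ] H}

lemma le_wA (hA : A.IsPositive) (hT : IsBoundedA A T) {x : H} (hx : normA A x = 1) :
    ‖innerA A (T x) x‖ ≤ wA A T := by
  refine le_csSup ⟨opNormA A T, ?_⟩ ⟨x, hx, rfl⟩
  rintro _ ⟨y, hy, rfl⟩
  calc ‖innerA A (T y) y‖ ≤ normA A (T y) * normA A y := norm_innerA_le hA _ _
    _ ≤ opNormA A T := by rw [hy, mul_one]; exact hT.le_opNormA hy

lemma normA_apply_le_opNormA_mul (hA : A.IsPositive) (hT : IsBoundedA A T) (x : H) :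
    normA A (T x) ≤ opNormA A T * normA A x := by
  by_cases hx : normA A x = 0
  · obtain ⟨K, hK⟩ := hT
    simpa [hx] using hK x
  · obtain ⟨u, hu, hxu⟩ := exists_normA_eq_one_smul hA hx
    rw [hxu, map_smul, normA_smul_ofReal hA (normA_nonneg A x),
      normA_smul_ofReal hA (normA_nonneg A x), hu, mul_one, mul_comm (opNormA A T)]
    exact mul_le_mul_of_nonneg_left (hT.le_opNormA hu) (normA_nonneg A x)

lemma norm_innerA_le_wA_mul (hA : A.IsPositive) (hT : IsBoundedA A T) (x : H) :
    ‖innerA A (T x) x‖ ≤ wA A T * normA A x ^ 2 := by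
  by_cases hx : normA A x = 0
  · have := norm_innerA_le hA (T x) x
    rw [hx, mul_zero] at this
    rw [hx]
    simpa using this
  · obtain ⟨u, hu, hxu⟩ := exists_normA_eq_one_smul hA hx
    have hscale : innerA A (T x) x = ((normA A x ^ 2 : ℝ) : ℂ) * innerA A (T u) u := by
      conv_lhs => rw [hxu]
      simp only [innerA, map_smul, inner_smul_left, inner_smul_right, Complex.conj_ofReal]
      push_cast
      ring
    rw [hscale, norm_mul, Complex.norm_real, Real.norm_of_nonneg (by positivity), mul_comm]
    exact mul_le_mul_of_nonneg_right (hT.le_wA hA hu) (by positivity)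

lemma normA_mul_apply_le (hA : A.IsPositive) (hS : IsBoundedA A S) (hT : IsBoundedA A T)
    (x : H) : normA A ((S * T) x) ≤ opNormA A S * opNormA A T * normA A x := by
  rw [mul_apply_eq_comp, mul_assoc]
  exact (hS.normA_apply_le_opNormA_mul hA _).trans
    (mul_le_mul_of_nonneg_left (hT.normA_apply_le_opNormA_mul hA x) (opNormA_nonneg A S))

lemma mul (hA : A.IsPositive) (hS : IsBoundedA A S) (hT : IsBoundedA A T) :
    IsBoundedA A (S * T) :=
  ⟨_, hS.normA_mul_apply_le hA hT⟩

lemma opNormA_mul_le (hA : A.IsPositive) (hS : IsBoundedA A S) (hT : IsBoundedA A T) :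
    opNormA A (S * T) ≤ opNormA A S * opNormA A T :=
  opNormA_le (mul_nonneg (opNormA_nonneg A S) (opNormA_nonneg A T)) fun x hx => by
    simpa [hx] using hS.normA_mul_apply_le hA hT x

end IsBoundedA

lemma two_mul_opNormA_le {A T U V : H →L[ℂ] H} (hA : A.IsPositive) (hU : IsBoundedA A U)
    (hV : IsBoundedA A V) (h : (2 : ℂ) • T = U + V) :
    2 * opNormA A T ≤ opNormA A U + opNormA A V := by
  rw [← le_div_iff₀' two_pos]
  refine opNormA_le (by positivity [opNormA_nonneg A U, opNormA_nonneg A V]) fun x hx => ?_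
  have h2 : 2 * normA A (T x) = normA A (U x + V x) := by
    rw [← add_apply, ← h, smul_apply, normA_smul hA, Complex.norm_two]
  have := (normA_add_le hA (U x) (V x)).trans (add_le_add (hU.le_opNormA hx) (hV.le_opNormA hx))
  linarith

namespace IsSelfAdjointA

variable {A S T : H →L[ℂ] H}

lemma add (hS : IsSelfAdjointA A S) (hT : IsSelfAdjointA A T) : IsSelfAdjointA A (S + T) := by
  rw [IsSelfAdjointA, comp_add, hS, hT, map_add, add_comp]

lemma sub (hS : IsSelfAdjointA A S) (hT : IsSelfAdjointA A T) : IsSelfAdjointA A (S - T) := by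
  rw [IsSelfAdjointA, comp_sub, hS, hT, map_sub, sub_comp]

lemma innerA_apply_left (hT : IsSelfAdjointA A T) (x y : H) :
    innerA A (T x) y = innerA A x (T y) := by
  rw [innerA, innerA, ← comp_apply, hT, comp_apply, adjoint_inner_right]

lemma innerA_pow_apply_left (hT : IsSelfAdjointA A T) (n : ℕ) (x y : H) :
    innerA A ((T ^ n) x) y = innerA A x ((T ^ n) y) := by
  induction n generalizing x with
  | zero => rfl
  | succ n ih =>
    calc innerA A ((T ^ (n + 1)) x) y = innerA A ((T ^ n) (T x)) y := by
          rw [pow_succ, mul_apply_eq_comp]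
      _ = innerA A x (T ((T ^ n) y)) := by rw [ih, hT.innerA_apply_left]
      _ = innerA A x ((T ^ (n + 1)) y) := by rw [pow_succ', mul_apply_eq_comp]

lemma normA_pow_apply_sq_le (hA : A.IsPositive) (hT : IsSelfAdjointA A T) (k : ℕ) (x : H) :
    normA A ((T ^ k) x) ^ 2 ≤ normA A x * normA A ((T ^ (2 * k)) x) := by
  rw [normA_sq hA, hT.innerA_pow_apply_left, two_mul, pow_add, mul_apply_eq_comp]
  exact (Complex.re_le_norm _).trans (norm_innerA_le hA _ _)

lemma normA_apply_pow_two_pow_mul_le (hA : A.IsPositive) (hT : IsSelfAdjointA A T) (n : ℕ)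
    (x : H) :
    normA A (T x) ^ 2 ^ n * normA A x ≤ normA A x ^ 2 ^ n * normA A ((T ^ 2 ^ n) x) := by
  induction n with
  | zero => simp [mul_comm]
  | succ n ih =>
    have hsq := hT.normA_pow_apply_sq_le hA (2 ^ n) x
    rw [← pow_succ'] at hsq
    rcases (normA_nonneg A x).eq_or_lt with hc | hc
    · rw [← hc, mul_zero]
      exact mul_nonneg (pow_nonneg le_rfl _) (normA_nonneg A _)
    · refine le_of_mul_le_mul_right ?_ hc
      calc normA A (T x) ^ 2 ^ (n + 1) * normA A x * normA A x
          = (normA A (T x) ^ 2 ^ n * normA A x) ^ 2 := by rw [pow_succ, pow_mul]; ring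
        _ ≤ (normA A x ^ 2 ^ n * normA A ((T ^ 2 ^ n) x)) ^ 2 := by
          gcongr
          exact mul_nonneg (pow_nonneg (normA_nonneg A _) _) hc.le
        _ = (normA A x ^ 2 ^ n) ^ 2 * normA A ((T ^ 2 ^ n) x) ^ 2 := by ring
        _ ≤ (normA A x ^ 2 ^ n) ^ 2 * (normA A x * normA A ((T ^ 2 ^ (n + 1)) x)) := by gcongr
        _ = normA A x ^ 2 ^ (n + 1) * normA A ((T ^ 2 ^ (n + 1)) x) * normA A x := by
          rw [pow_succ 2 n, pow_mul]; ring

/-- Reid's inequality, by the power trick: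
`(‖Tx‖_A / ‖x‖_A)^{2^n} ≤ ‖T^{2^n} x‖_A / ‖x‖_A ≤ C ‖T‖^{2^n}`, and `2^n`-th roots remove `C`. -/
lemma normA_apply_le (hA : A.IsPositive) (hT : IsSelfAdjointA A T) (x : H) :
    normA A (T x) ≤ ‖T‖ * normA A x := by
  rcases (normA_nonneg A x).eq_or_lt with hc | hc
  · have hsq := hT.normA_pow_apply_sq_le hA 1 x
    rw [← hc, zero_mul, pow_one] at hsq
    rw [← hc, mul_zero]
    nlinarith [normA_nonneg A (T x)]
  · refine le_of_forall_pow_two_pow_le_mul (by positivity)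
      (K := ‖CFC.sqrt A‖ * ‖x‖ / normA A x) fun n => ?_
    have hgrowth : normA A ((T ^ 2 ^ n) x) ≤ ‖CFC.sqrt A‖ * (‖T‖ ^ 2 ^ n * ‖x‖) :=
      (normA_le hA _).trans (mul_le_mul_of_nonneg_left
        ((le_opNorm _ _).trans (by gcongr; exact norm_pow_le' _ (by positivity))) (norm_nonneg _))
    rw [mul_pow, div_mul_eq_mul_div, le_div_iff₀ hc]
    calc normA A (T x) ^ 2 ^ n * normA A x
        ≤ normA A x ^ 2 ^ n * normA A ((T ^ 2 ^ n) x) :=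
          hT.normA_apply_pow_two_pow_mul_le hA n x
      _ ≤ normA A x ^ 2 ^ n * (‖CFC.sqrt A‖ * (‖T‖ ^ 2 ^ n * ‖x‖)) := by gcongr
      _ = ‖CFC.sqrt A‖ * ‖x‖ * (‖T‖ ^ 2 ^ n * normA A x ^ 2 ^ n) := by ring

lemma isBoundedA (hA : A.IsPositive) (hT : IsSelfAdjointA A T) : IsBoundedA A T :=
  ⟨‖T‖, hT.normA_apply_le hA⟩

/-- Polarization: as `A T` is selfadjoint, `4 Re ⟨Tx, y⟩_A = ⟨T(x+y), x+y⟩_A - ⟨T(x-y), x-y⟩_A`,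
which the parallelogram law bounds. -/
lemma two_mul_re_innerA_le (hA : A.IsPositive) (hT : IsSelfAdjointA A T) (x y : H) :
    2 * (innerA A (T x) y).re ≤ wA A T * (normA A x ^ 2 + normA A y ^ 2) := by
  have hpol : innerA A (T (x + y)) (x + y) - innerA A (T (x - y)) (x - y)
      = 2 * (innerA A (T x) y + innerA A (T y) x) := by
    simp only [innerA, map_add, map_sub, inner_add_left, inner_add_right, inner_sub_left,
      inner_sub_right]
    ring
  have hsymm : innerA A (T y) x = starRingEnd ℂ (innerA A (T x) y) := by
    rw [hT.innerA_apply_left, innerA_conj_symm hA]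
  have hre := congrArg Complex.re hpol
  simp only [hsymm, Complex.sub_re, Complex.mul_re, Complex.add_re, Complex.add_im,
    Complex.conj_re, Complex.conj_im, Complex.re_ofNat, Complex.im_ofNat, zero_mul,
    sub_zero] at hre
  have hbdd := hT.isBoundedA hA
  have hplus := (Complex.re_le_norm _).trans (hbdd.norm_innerA_le_wA_mul hA (x + y))
  have hminus := ((neg_le_abs _).trans (Complex.abs_re_le_norm _)).trans
    (hbdd.norm_innerA_le_wA_mul hA (x - y))
  have hpar := congrArg (wA A T * ·) (normA_add_sq_add_normA_sub_sq hA x y)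
  linarith

lemma opNormA_le_wA (hA : A.IsPositive) (hT : IsSelfAdjointA A T) : opNormA A T ≤ wA A T := by
  refine opNormA_le (wA_nonneg A T) fun x hx => ?_
  by_cases hTx : normA A (T x) = 0
  · exact hTx ▸ wA_nonneg A T
  obtain ⟨u, hu, hTxu⟩ := exists_normA_eq_one_smul hA hTx
  have hre : (innerA A (T x) u).re = normA A (T x) := by
    conv_lhs => rw [hTxu]
    simp only [innerA, map_smul, inner_smul_right, Complex.re_ofReal_mul]
    rw [← innerA, ← normA_sq hA, hu, one_pow, mul_one]
  have := hT.two_mul_re_innerA_le hA x u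
  rw [hre, hx, hu] at this
  linarith

end IsSelfAdjointA

section Pair

variable {A B C : H →L[ℂ] H}

lemma le_wAe (hA : A.IsPositive) (hB : IsBoundedA A B) (hC : IsBoundedA A C) {x : H}
    (hx : normA A x = 1) :
    √(‖innerA A (B x) x‖ ^ 2 + ‖innerA A (C x) x‖ ^ 2) ≤ wAe A B C := by
  refine le_csSup ⟨wA A B + wA A C, ?_⟩ ⟨x, hx, rfl⟩
  rintro _ ⟨y, hy, rfl⟩
  have hBy := hB.le_wA hA hy
  have hCy := hC.le_wA hA hy
  rw [Real.sqrt_le_left (add_nonneg (wA_nonneg A B) (wA_nonneg A C))]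
  nlinarith [norm_nonneg (innerA A (B y) y), norm_nonneg (innerA A (C y) y)]

lemma wA_le_sqrt_two_mul_wAe (hA : A.IsPositive) (hB : IsBoundedA A B) (hC : IsBoundedA A C)
    {D : H →L[ℂ] H}
    (hD : ∀ x, ‖innerA A (D x) x‖ ≤ ‖innerA A (B x) x‖ + ‖innerA A (C x) x‖) :
    wA A D ≤ √2 * wAe A B C := by
  refine wA_le (mul_nonneg (Real.sqrt_nonneg 2) (wAe_nonneg A B C)) fun x hx => (hD x).trans ?_
  calc ‖innerA A (B x) x‖ + ‖innerA A (C x) x‖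
      ≤ √2 * √(‖innerA A (B x) x‖ ^ 2 + ‖innerA A (C x) x‖ ^ 2) := by
        rw [← Real.sqrt_mul zero_le_two]
        apply Real.le_sqrt_of_sq_le
        nlinarith [sq_nonneg (‖innerA A (B x) x‖ - ‖innerA A (C x) x‖)]
    _ ≤ √2 * wAe A B C := by gcongr; exact le_wAe hA hB hC hx

lemma two_mul_max_opNormA_le (hA : A.IsPositive) (hs : IsBoundedA A (B + C))
    (hd : IsBoundedA A (B - C)) :
    2 * max (opNormA A B) (opNormA A C) ≤ opNormA A (B + C) + opNormA A (B - C) := by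
  rw [mul_max_of_nonneg _ _ zero_le_two]
  refine max_le (two_mul_opNormA_le hA hs hd (by rw [two_smul]; abel)) ?_
  rw [← opNormA_neg A (B - C)]
  exact two_mul_opNormA_le hA hs hd.neg (by rw [two_smul]; abel)

lemma two_mul_opNormA_mul_self_add_mul_self_le (hA : A.IsPositive) (hs : IsBoundedA A (B + C))
    (hd : IsBoundedA A (B - C)) :
    2 * opNormA A (B * B + C * C) ≤ opNormA A (B + C) ^ 2 + opNormA A (B - C) ^ 2 := by
  refine (two_mul_opNormA_le hA (hs.mul hA hs) (hd.mul hA hd)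
    (by rw [two_smul]; noncomm_ring)).trans ?_
  rw [sq, sq]
  exact add_le_add (hs.opNormA_mul_le hA hs) (hd.opNormA_mul_le hA hd)

end Pair

lemma half_mul_add_half_mul_mul_abs_sub_le {N M s t w : ℝ} (hs : 0 ≤ s) (ht : 0 ≤ t)
    (hsw : s ≤ √2 * w) (htw : t ≤ √2 * w) (hN : 2 * N ≤ s ^ 2 + t ^ 2) (hM : 2 * M ≤ s + t) :
    1 / 2 * N + 1 / 2 * M * |s - t| ≤ w ^ 2 := by
  have h2 : √2 ^ 2 = 2 := Real.sq_sqrt zero_le_two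
  have hs2 : s ^ 2 ≤ 2 * w ^ 2 := by nlinarith [Real.sqrt_nonneg 2]
  have ht2 : t ^ 2 ≤ 2 * w ^ 2 := by nlinarith [Real.sqrt_nonneg 2]
  have hMst : 2 * M * |s - t| ≤ (s + t) * |s - t| := by gcongr
  rcases le_total s t with hst | hst
  · rw [abs_of_nonpos (sub_nonpos.mpr hst)] at hMst ⊢
    nlinarith
  · rw [abs_of_nonneg (sub_nonneg.mpr hst)] at hMst ⊢
    nlinarith

theorem stmt2_general (A : H →L[ℂ] H) (hA : A.IsPositive)
    (B C : H →L[ℂ] H)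
    (hB : A.comp B = (ContinuousLinearMap.adjoint B).comp A)
    (hC : A.comp C = (ContinuousLinearMap.adjoint C).comp A) :
    (1/2) * opNormA A (B * B + C * C)
      + (1/2) * max (opNormA A B) (opNormA A C)
          * |opNormA A (B + C) - opNormA A (B - C)|
      ≤ (wAe A B C)^2 := by
  have hB' : IsSelfAdjointA A B := hB
  have hC' : IsSelfAdjointA A C := hC
  have hs := (hB'.add hC').isBoundedA hA
  have hd := (hB'.sub hC').isBoundedA hA
  refine half_mul_add_half_mul_mul_abs_sub_le (opNormA_nonneg A _) (opNormA_nonneg A _) ?_ ?_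
    (two_mul_opNormA_mul_self_add_mul_self_le hA hs hd) (two_mul_max_opNormA_le hA hs hd)
  · refine ((hB'.add hC').opNormA_le_wA hA).trans
      (wA_le_sqrt_two_mul_wAe hA (hB'.isBoundedA hA) (hC'.isBoundedA hA) fun x => ?_)
    simpa only [innerA, add_apply, map_add, inner_add_right] using norm_add_le _ _
  · refine ((hB'.sub hC').opNormA_le_wA hA).trans
      (wA_le_sqrt_two_mul_wAe hA (hB'.isBoundedA hA) (hC'.isBoundedA hA) fun x => ?_)
    simpa only [innerA, sub_apply, map_sub, inner_sub_right] using norm_sub_le _ _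

theorem stmt2 (A : H →L[ℂ] H) (hA : A.IsPositive) (hA0 : A ≠ 0)
    (B C : H →L[ℂ] H)
    (hB : A.comp B = (ContinuousLinearMap.adjoint B).comp A)
    (hC : A.comp C = (ContinuousLinearMap.adjoint C).comp A) :
    (1/2) * opNormA A (B * B + C * C)
      + (1/2) * max (opNormA A B) (opNormA A C)
          * |opNormA A (B + C) - opNormA A (B - C)|
      ≤ (wAe A B C)^2 :=
  stmt2_general A hA B C hB hC
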